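/- Let A be a random N×N symmetric matrix with zero diagonal whose off-diagonal entries are a_{ij} = B_{ij} w_{ij}, where {B_{ij} = B_{ji}, i<j} are i.i.d. Bernoulli(p) and w_{ij} = w_{ji} ≥ 0 are deterministic. Then for any deterministic symmetric positive semidefinite Q, E[A^T Q A] = p² W^T Q W + p(1−p)(W^T ∘ Q ∘ W − diag(W^T ∘ Q ∘ W)) + p(1−p) diag(W^T diag(Q) W), where W = (w_{ij}), ∘ is the Hadamard product, and diag(·) extracts/forms the diagonal. -/

import Mathlib

/-!
Entrywise, `(AᵀQA)ᵢⱼ = ∑ₗ ∑ₖ Wₖᵢ Qₖₗ Wₗⱼ Bₖᵢ Bₗⱼ`. Terms with `k = i` or `l = j` vanish because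
`W` has zero diagonal. Otherwise `E[Bₖᵢ Bₗⱼ]` is `p` when `{k, i} = {l, j}` is one edge (`B² = B`) and `p²`
when the edges differ (independence), i.e. `p² + p(1 - p)·[{k, i} = {l, j}]`. The coinciding
edges are `k = l` when `i = j`, giving `∑ₖ Wₖᵢ² Qₖₖ`, and only `(k, l) = (j, i)` when `i ≠ j`,
giving `Wⱼᵢ Qⱼᵢ Wᵢⱼ`, which is the Hadamard term because `Q` is symmetric.
-/

open MeasureTheory ProbabilityTheory Matrix

def diagPart {N : ℕ} (M : Matrix (Fin N) (Fin N) ℝ) : Matrix (Fin N) (Fin N) ℝ :=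
  Matrix.diagonal fun i => M i i

theorem Sym2.mk_min_max {α : Type*} [LinearOrder α] (a b : α) : s(min a b, max a b) = s(a, b) := by
  rcases le_total a b with h | h
  · rw [min_eq_left h, max_eq_right h]
  · rw [min_eq_right h, max_eq_left h, Sym2.eq_swap]

section
variable {Ω : Type*} [MeasurableSpace Ω] {μ : Measure Ω}

theorem integrable_of_zero_or_one [IsFiniteMeasure μ] {f : Ω → ℝ} (hf : Measurable f)
    (h01 : ∀ ω, f ω = 0 ∨ f ω = 1) : Integrable f μ :=
  .of_bound hf.aestronglyMeasurable 1 <| .of_forall fun ω => by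
    rcases h01 ω with h | h <;> simp [h]

variable {N : ℕ} {p : ℝ} {B : Fin N → Fin N → Ω → ℝ}

theorem integral_mul_eq_ite_sym2
    (hBmeas : ∀ i j, Measurable (B i j))
    (hBsym : ∀ i j, B i j = B j i)
    (hB01 : ∀ i j ω, B i j ω = 0 ∨ B i j ω = 1)
    (hBmean : ∀ i j, i ≠ j → ∫ ω, B i j ω ∂μ = p)
    (hBindep : iIndepFun
      (fun q : {q : Fin N × Fin N // q.1 < q.2} => B q.val.1 q.val.2) μ)
    {k i l j : Fin N} (hki : k ≠ i) (hlj : l ≠ j) :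
    ∫ ω, B k i ω * B l j ω ∂μ = if s(k, i) = s(l, j) then p else p ^ 2 := by
  split_ifs with hedge
  · have hsame : B l j = B k i := by
      rcases Sym2.eq_iff.mp hedge with ⟨rfl, rfl⟩ | ⟨rfl, rfl⟩
      exacts [rfl, hBsym _ _]
    have hidem : ∀ ω, B k i ω * B k i ω = B k i ω := fun ω => by
      rcases hB01 k i ω with h | h <;> simp [h]
    simp_rw [hsame, hidem]
    exact hBmean k i hki
  · let edge (a b : Fin N) (h : a ≠ b) : {q : Fin N × Fin N // q.1 < q.2} :=
      ⟨(min a b, max a b), min_lt_max.mpr h⟩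
    have hB_edge : ∀ a b (h : a ≠ b), B a b = B (edge a b h).1.1 (edge a b h).1.2 := by
      intro a b h
      rcases le_total a b with hab | hab
      · simp [edge, hab]
      · simp [edge, hab, hBsym a b]
    have hne : edge k i hki ≠ edge l j hlj := fun h => hedge <| by
      rw [← Sym2.mk_min_max k i, ← Sym2.mk_min_max l j]
      exact congrArg (fun q : {q : Fin N × Fin N // q.1 < q.2} => s(q.1.1, q.1.2)) h
    rw [hB_edge k i hki, hB_edge l j hlj,
      (hBindep.indepFun hne).integral_fun_mul_eq_mul_integral (hBmeas _ _).aestronglyMeasurable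
        (hBmeas _ _).aestronglyMeasurable, ← hB_edge k i hki, ← hB_edge l j hlj,
      hBmean k i hki, hBmean l j hlj, sq]

theorem mul_integral_mul_eq_add_ite
    (hBmeas : ∀ i j, Measurable (B i j))
    (hBsym : ∀ i j, B i j = B j i)
    (hB01 : ∀ i j ω, B i j ω = 0 ∨ B i j ω = 1)
    (hBmean : ∀ i j, i ≠ j → ∫ ω, B i j ω ∂μ = p)
    (hBindep : iIndepFun
      (fun q : {q : Fin N × Fin N // q.1 < q.2} => B q.val.1 q.val.2) μ)
    {W : Matrix (Fin N) (Fin N) ℝ} (hWdiag : ∀ i, W i i = 0) (c : ℝ) (k i l j : Fin N) :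
    W k i * c * W l j * ∫ ω, B k i ω * B l j ω ∂μ =
      p ^ 2 * (W k i * c * W l j)
        + p * (1 - p) * (if s(k, i) = s(l, j) then W k i * c * W l j else 0) := by
  rcases eq_or_ne k i with rfl | hki
  · simp [hWdiag]
  rcases eq_or_ne l j with rfl | hlj
  · simp [hWdiag]
  rw [integral_mul_eq_ite_sym2 hBmeas hBsym hB01 hBmean hBindep hki hlj]
  split_ifs <;> ring

end

theorem transpose_mul_mul_apply {n R : Type*} [Fintype n] [CommSemiring R]
    (W Q : Matrix n n R) (i j : n) :
    (Wᵀ * Q * W) i j = ∑ l, ∑ k, W k i * Q k l * W l j := by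
  simp only [mul_apply, transpose_apply, Finset.sum_mul]

theorem integral_transpose_mul_mul_apply {Ω : Type*} [MeasurableSpace Ω] {μ : Measure Ω}
    {N : ℕ} {B : Fin N → Fin N → Ω → ℝ}
    (hint : ∀ k i l j, Integrable (fun ω => B k i ω * B l j ω) μ)
    {W Q : Matrix (Fin N) (Fin N) ℝ} {A : Ω → Matrix (Fin N) (Fin N) ℝ}
    (hA : ∀ ω i j, A ω i j = B i j ω * W i j) (i j : Fin N) :
    ∫ ω, ((A ω)ᵀ * Q * A ω) i j ∂μ
      = ∑ l, ∑ k, W k i * Q k l * W l j * ∫ ω, B k i ω * B l j ω ∂μ := by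
  have hexpand : ∀ ω, ((A ω)ᵀ * Q * A ω) i j
      = ∑ l, ∑ k, W k i * Q k l * W l j * (B k i ω * B l j ω) := fun ω => by
    rw [transpose_mul_mul_apply]
    simp only [hA]
    exact Finset.sum_congr rfl fun _ _ => Finset.sum_congr rfl fun _ _ => by ring
  simp_rw [hexpand]
  rw [integral_finsetSum _ fun l _ => integrable_finsetSum _ fun k _ => (hint k i l j).const_mul _]
  refine Finset.sum_congr rfl fun l _ => ?_
  rw [integral_finsetSum _ fun k _ => (hint k i l j).const_mul _]
  simp only [integral_const_mul]

theorem sum_sum_ite_sym2_eq {N : ℕ} (W Q : Matrix (Fin N) (Fin N) ℝ) (hQ : Q.IsSymm) (i j : Fin N) :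
    ∑ l, ∑ k, (if s(k, i) = s(l, j) then W k i * Q k l * W l j else 0) =
      (Wᵀ ⊙ Q ⊙ W - diagPart (Wᵀ ⊙ Q ⊙ W) + diagPart (Wᵀ * diagPart Q * W)) i j := by
  rcases eq_or_ne i j with rfl | hij
  · have hpair : ∀ k l : Fin N, s(k, i) = s(l, i) ↔ k = l := fun k l => by
      rw [Sym2.eq_iff]; constructor
      · rintro (⟨h, -⟩ | ⟨h1, h2⟩) <;> [exact h; exact h1.trans h2]
      · exact fun h => Or.inl ⟨h, rfl⟩
    simp [hpair, diagPart, Matrix.mul_apply, Matrix.diagonal_apply, mul_ite]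
  · have hpair : ∀ k l : Fin N, s(k, i) = s(l, j) ↔ k = j ∧ l = i := fun k l => by
      rw [Sym2.eq_iff]; constructor
      · rintro (⟨-, h⟩ | ⟨h1, h2⟩) <;> [exact absurd h hij; exact ⟨h1, h2.symm⟩]
      · exact fun ⟨h1, h2⟩ => Or.inr ⟨h1, h2.symm⟩
    simp [hpair, ite_and, diagPart, Matrix.diagonal_apply_ne _ hij, hQ.apply i j]

theorem expected_AQA_general
    {Ω : Type*} [MeasurableSpace Ω] (μ : Measure Ω) [IsProbabilityMeasure μ]
    (N : ℕ) (p : ℝ)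
    (W : Matrix (Fin N) (Fin N) ℝ)
    (hWdiag : ∀ i, W i i = 0)
    (B : Fin N → Fin N → Ω → ℝ)
    (hBmeas : ∀ i j, Measurable (B i j))
    (hBsym : ∀ i j, B i j = B j i)
    (hB01 : ∀ i j ω, B i j ω = 0 ∨ B i j ω = 1)
    (hBmean : ∀ i j, i ≠ j → ∫ ω, B i j ω ∂μ = p)
    (hBindep : iIndepFun
      (fun q : {q : Fin N × Fin N // q.1 < q.2} => B q.val.1 q.val.2) μ)
    (A : Ω → Matrix (Fin N) (Fin N) ℝ)
    (hA : ∀ ω i j, A ω i j = B i j ω * W i j)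
    (Q : Matrix (Fin N) (Fin N) ℝ) (hQ : Q.PosSemidef) :
    (Matrix.of fun i j => ∫ ω, ((A ω)ᵀ * Q * A ω) i j ∂μ) =
      p ^ 2 • (Wᵀ * Q * W)
        + (p * (1 - p)) • (Wᵀ ⊙ Q ⊙ W - diagPart (Wᵀ ⊙ Q ⊙ W))
        + (p * (1 - p)) • diagPart (Wᵀ * diagPart Q * W) := by
  have hint : ∀ k i l j, Integrable (fun ω => B k i ω * B l j ω) μ := fun k i l j =>
    integrable_of_zero_or_one ((hBmeas k i).mul (hBmeas l j)) fun ω => by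
      rcases hB01 k i ω with h | h <;> rcases hB01 l j ω with h' | h' <;> simp [h, h']
  ext i j
  rw [of_apply, integral_transpose_mul_mul_apply hint hA]
  simp only [mul_integral_mul_eq_add_ite hBmeas hBsym hB01 hBmean hBindep hWdiag,
    Finset.sum_add_distrib, ← Finset.mul_sum]
  rw [← transpose_mul_mul_apply, sum_sum_ite_sym2_eq W Q (isHermitian_iff_isSymm.mp hQ.1)]
  simp only [Matrix.add_apply, Matrix.smul_apply, smul_eq_mul]
  ring

/-- Second moment of the random adjacency matrix (Corollary 2, model (ii)):
for `A = B ∘ W` with i.i.d. Bernoulli(p) edge activations,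
`E[Aᵀ Q A] = p² Wᵀ Q W + p(1−p)(Wᵀ∘Q∘W − diag(Wᵀ∘Q∘W)) + p(1−p) diag(Wᵀ diag(Q) W)`. -/
theorem expected_AQA
    {Ω : Type*} [MeasurableSpace Ω] (μ : Measure Ω) [IsProbabilityMeasure μ]
    (N : ℕ) (p : ℝ) (hp0 : 0 ≤ p) (hp1 : p ≤ 1)
    (W : Matrix (Fin N) (Fin N) ℝ)
    (hWsym : W.IsSymm) (hWnonneg : ∀ i j, 0 ≤ W i j) (hWdiag : ∀ i, W i i = 0)
    (B : Fin N → Fin N → Ω → ℝ)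
    (hBmeas : ∀ i j, Measurable (B i j))
    (hBsym : ∀ i j, B i j = B j i)
    (hB01 : ∀ i j ω, B i j ω = 0 ∨ B i j ω = 1)
    (hBmean : ∀ i j, i ≠ j → ∫ ω, B i j ω ∂μ = p)
    (hBindep : iIndepFun
      (fun q : {q : Fin N × Fin N // q.1 < q.2} => B q.val.1 q.val.2) μ)
    (A : Ω → Matrix (Fin N) (Fin N) ℝ)
    (hA : ∀ ω i j, A ω i j = B i j ω * W i j)
    (Q : Matrix (Fin N) (Fin N) ℝ) (hQ : Q.PosSemidef) :
    (Matrix.of fun i j => ∫ ω, ((A ω)ᵀ * Q * A ω) i j ∂μ) =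
      p ^ 2 • (Wᵀ * Q * W)
        + (p * (1 - p)) • (Wᵀ ⊙ Q ⊙ W - diagPart (Wᵀ ⊙ Q ⊙ W))
        + (p * (1 - p)) • diagPart (Wᵀ * diagPart Q * W) :=
  expected_AQA_general μ N p W hWdiag B hBmeas hBsym hB01 hBmean hBindep A hA Q hQ
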